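/- arXiv:1104.0829 — 2 statements merged into one kernel-verified Lean document; each statement's English description precedes it below -/
import Mathlib

section
/- Let σ(t,x,y) = u(t,x,w(x,y)) be the geodesic from x to y parametrized on [0,1]. Then at diagonal points: σ(t,x,x) = x, σ'(t,x,x)·(ξ,η) = ξ + t(η−ξ), and σ''(t,x,x)·((ξ₁,η₁),(ξ₂,η₂)) = ((t−t²)/2)·(Γ(x)(η₁−ξ₁, η₂−ξ₂) + Γ(x)(η₂−ξ₂, η₁−ξ₁)). -/
/-!
Write `σ(t, ·) = U ∘ g` with `U = u(t, ·, ·)` and `g(x, y) = (x, w(x, y))`. The first- and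
second-order chain rules express the derivatives of `σ` at `(x, x)` through those of `U` at
`(x, 0)` and of `w` at `(x, x)`. The first component of `g` is linear, so `g''` is `(0, w'')`, and
the two `Γ`-terms add up as `-t²/2 + t·1/2 = (t - t²)/2`.
-/

open ContinuousLinearMap Topology

section

variable {𝕜 E F G H : Type*} [NontriviallyNormedField 𝕜]
  [NormedAddCommGroup E] [NormedSpace 𝕜 E] [NormedAddCommGroup F] [NormedSpace 𝕜 F]
  [NormedAddCommGroup G] [NormedSpace 𝕜 G] [NormedAddCommGroup H] [NormedSpace 𝕜 H]

theorem fderiv_fderiv_comp_apply {f : F → G} {g : E → F} {x : E}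
    (hf : ContDiffAt 𝕜 2 f (g x)) (hg : ContDiffAt 𝕜 2 g x) (v₁ v₂ : E) :
    fderiv 𝕜 (fderiv 𝕜 fun y => f (g y)) x v₁ v₂ =
      fderiv 𝕜 (fderiv 𝕜 f) (g x) (fderiv 𝕜 g x v₁) (fderiv 𝕜 g x v₂)
        + fderiv 𝕜 f (g x) (fderiv 𝕜 (fderiv 𝕜 g) x v₁ v₂) := by
  have hchain : (fderiv 𝕜 fun y => f (g y)) =ᶠ[𝓝 x]
      fun y => (fderiv 𝕜 f (g y)).comp (fderiv 𝕜 g y) := by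
    filter_upwards [hg.continuousAt.eventually (hf.eventually (by simp)),
      hg.eventually (by simp)] with y hfy hgy
    exact fderiv_comp y (hfy.differentiableAt two_ne_zero) (hgy.differentiableAt two_ne_zero)
  have hf' := (hf.fderiv_right one_add_one_eq_two.le).differentiableAt one_ne_zero
  have hg' := (hg.fderiv_right one_add_one_eq_two.le).differentiableAt one_ne_zero
  have hD : HasFDerivAt (fun y => (fderiv 𝕜 f (g y)).comp (fderiv 𝕜 g y)) _ x :=
    (hf'.hasFDerivAt.comp x (hg.differentiableAt two_ne_zero).hasFDerivAt).clm_comp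
      hg'.hasFDerivAt
  rw [hchain.fderiv_eq, hD.fderiv]
  simp only [add_apply, comp_apply, flip_apply, compL_apply, Function.comp_apply]
  exact add_comm _ _

theorem fderiv_fderiv_prodMk_apply {g₁ : E → F} {g₂ : E → G} {x : E}
    (hg₁ : ContDiffAt 𝕜 2 g₁ x) (hg₂ : ContDiffAt 𝕜 2 g₂ x) (v₁ v₂ : E) :
    fderiv 𝕜 (fderiv 𝕜 fun y => (g₁ y, g₂ y)) x v₁ v₂ =
      (fderiv 𝕜 (fderiv 𝕜 g₁) x v₁ v₂, fderiv 𝕜 (fderiv 𝕜 g₂) x v₁ v₂) := by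
  have hpair : (fderiv 𝕜 fun y => (g₁ y, g₂ y)) =ᶠ[𝓝 x]
      fun y => prodL 𝕜 (fderiv 𝕜 g₁ y, fderiv 𝕜 g₂ y) := by
    filter_upwards [hg₁.eventually (by simp), hg₂.eventually (by simp)] with y h₁ h₂
    exact (h₁.differentiableAt two_ne_zero).fderiv_prodMk (h₂.differentiableAt two_ne_zero)
  have h₁ := (hg₁.fderiv_right one_add_one_eq_two.le).differentiableAt one_ne_zero
  have h₂ := (hg₂.fderiv_right one_add_one_eq_two.le).differentiableAt one_ne_zero
  have hD : HasFDerivAt (fun y => prodL 𝕜 (fderiv 𝕜 g₁ y, fderiv 𝕜 g₂ y)) _ x :=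
    (prodL 𝕜 : ((E →L[𝕜] F) × (E →L[𝕜] G)) ≃L[𝕜] (E →L[𝕜] F × G)).hasFDerivAt.comp x
      (h₁.hasFDerivAt.prodMk h₂.hasFDerivAt)
  rw [hpair.fderiv_eq, hD.fderiv]
  rfl

theorem fderiv_fst_prodMk_apply {W : E × H → F} {p : E × H} (hW : DifferentiableAt 𝕜 W p)
    (v : E × H) :
    fderiv 𝕜 (fun q => (q.1, W q)) p v = (v.1, fderiv 𝕜 W p v) := by
  rw [differentiableAt_fst.fderiv_prodMk hW, prod_apply, fderiv_fst, coe_fst']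

theorem fderiv_fderiv_fst_prodMk_apply {W : E × H → F} {p : E × H} (hW : ContDiffAt 𝕜 2 W p)
    (v₁ v₂ : E × H) :
    fderiv 𝕜 (fderiv 𝕜 fun q => (q.1, W q)) p v₁ v₂ = (0, fderiv 𝕜 (fderiv 𝕜 W) p v₁ v₂) := by
  have hfst : fderiv 𝕜 (fun q : E × H => q.1) = fun _ => fst 𝕜 E H := funext fun _ => fderiv_fst
  rw [fderiv_fderiv_prodMk_apply contDiffAt_fst hW, hfst, fderiv_fun_const, Pi.zero_apply,
    zero_apply, zero_apply]

theorem fderiv_comp_fst_prodMk_apply {U : E × F → G} {W : E × H → F} {p : E × H}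
    (hU : DifferentiableAt 𝕜 U (p.1, W p)) (hW : DifferentiableAt 𝕜 W p) (v : E × H) :
    fderiv 𝕜 (fun q => U (q.1, W q)) p v = fderiv 𝕜 U (p.1, W p) (v.1, fderiv 𝕜 W p v) := by
  rw [fderiv_fun_comp (f := fun q => (q.1, W q)) p hU (differentiableAt_fst.prodMk hW),
    comp_apply, fderiv_fst_prodMk_apply hW]

theorem fderiv_fderiv_comp_fst_prodMk_apply {U : E × F → G} {W : E × H → F} {p : E × H}
    (hU : ContDiffAt 𝕜 2 U (p.1, W p)) (hW : ContDiffAt 𝕜 2 W p) (v₁ v₂ : E × H) :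
    fderiv 𝕜 (fderiv 𝕜 fun q => U (q.1, W q)) p v₁ v₂ =
      fderiv 𝕜 (fderiv 𝕜 U) (p.1, W p) (v₁.1, fderiv 𝕜 W p v₁) (v₂.1, fderiv 𝕜 W p v₂)
        + fderiv 𝕜 U (p.1, W p) (0, fderiv 𝕜 (fderiv 𝕜 W) p v₁ v₂) := by
  rw [fderiv_fderiv_comp_apply (g := fun q => (q.1, W q)) hU (contDiffAt_fst.prodMk hW),
    fderiv_fst_prodMk_apply (hW.differentiableAt two_ne_zero),
    fderiv_fst_prodMk_apply (hW.differentiableAt two_ne_zero),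
    fderiv_fderiv_fst_prodMk_apply hW]

end

/-- Let `σ(t,x,y) = u(t,x,wmap(x,y))` be the geodesic from `x` to `y`
parametrized on `[0,1]`. Then at diagonal points: `σ(t,x,x) = x`,
`σ'(t,x,x)·(ξ,η) = ξ + t(η−ξ)`, and
`σ''(t,x,x)·((ξ₁,η₁),(ξ₂,η₂)) = ((t−t²)/2)(Γ(x)(η₁−ξ₁,η₂−ξ₂) + Γ(x)(η₂−ξ₂,η₁−ξ₁))`,
given the diagonal derivatives of `u(t,·,·)` at `(y,0)` and of `wmap` at `(y,y)`. -/
theorem geodesic_sigma_diagonal_derivatives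
    {n : ℕ} (V : Set (EuclideanSpace ℝ (Fin n))) (hV : IsOpen V)
    (x : EuclideanSpace ℝ (Fin n)) (hx : x ∈ V)
    (Γ : EuclideanSpace ℝ (Fin n) →
      EuclideanSpace ℝ (Fin n) →L[ℝ] EuclideanSpace ℝ (Fin n) →L[ℝ] EuclideanSpace ℝ (Fin n))
    (u : ℝ → EuclideanSpace ℝ (Fin n) → EuclideanSpace ℝ (Fin n) → EuclideanSpace ℝ (Fin n))
    (wmap : EuclideanSpace ℝ (Fin n) → EuclideanSpace ℝ (Fin n) → EuclideanSpace ℝ (Fin n))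
    (W : Set (EuclideanSpace ℝ (Fin n) × EuclideanSpace ℝ (Fin n))) (hW : IsOpen W)
    (hmem : ∀ y ∈ V, ∀ z ∈ V, (y, wmap y z) ∈ W)
    -- smoothness and diagonal derivatives of the geodesic flow `u` (in the initial data)
    (husmooth : ∀ t : ℝ, ContDiffOn ℝ (⊤ : ℕ∞)
      (fun q : EuclideanSpace ℝ (Fin n) × EuclideanSpace ℝ (Fin n) => u t q.1 q.2) W)
    (hu0 : ∀ t : ℝ, ∀ y ∈ V, u t y 0 = y)
    (huder : ∀ t : ℝ, ∀ y ∈ V, ∀ ξ η : EuclideanSpace ℝ (Fin n),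
      fderiv ℝ (fun q : EuclideanSpace ℝ (Fin n) × EuclideanSpace ℝ (Fin n) =>
        u t q.1 q.2) (y, 0) (ξ, η) = ξ + t • η)
    (huder2 : ∀ t : ℝ, ∀ y ∈ V, ∀ ξ₁ η₁ ξ₂ η₂ : EuclideanSpace ℝ (Fin n),
      fderiv ℝ (fun q : EuclideanSpace ℝ (Fin n) × EuclideanSpace ℝ (Fin n) =>
          fderiv ℝ (fun q' : EuclideanSpace ℝ (Fin n) × EuclideanSpace ℝ (Fin n) =>
            u t q'.1 q'.2) q) (y, 0) (ξ₁, η₁) (ξ₂, η₂)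
        = -((t ^ 2 / 2) • (Γ y η₁ η₂ + Γ y η₂ η₁)))
    -- smoothness and diagonal derivatives of the initial-velocity map `wmap`
    (hwsmooth : ContDiffOn ℝ (⊤ : ℕ∞)
      (fun q : EuclideanSpace ℝ (Fin n) × EuclideanSpace ℝ (Fin n) => wmap q.1 q.2) (V ×ˢ V))
    (hwdiag : ∀ y ∈ V, wmap y y = 0)
    (hwder : ∀ y ∈ V, ∀ ξ η : EuclideanSpace ℝ (Fin n),
      fderiv ℝ (fun q : EuclideanSpace ℝ (Fin n) × EuclideanSpace ℝ (Fin n) =>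
        wmap q.1 q.2) (y, y) (ξ, η) = η - ξ)
    (hwder2 : ∀ y ∈ V, ∀ ξ₁ η₁ ξ₂ η₂ : EuclideanSpace ℝ (Fin n),
      fderiv ℝ (fun q : EuclideanSpace ℝ (Fin n) × EuclideanSpace ℝ (Fin n) =>
          fderiv ℝ (fun q' : EuclideanSpace ℝ (Fin n) × EuclideanSpace ℝ (Fin n) =>
            wmap q'.1 q'.2) q) (y, y) (ξ₁, η₁) (ξ₂, η₂)
        = (1 / 2 : ℝ) • (Γ y (η₁ - ξ₁) (η₂ - ξ₂) + Γ y (η₂ - ξ₂) (η₁ - ξ₁))) :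
    ∀ t : ℝ,
      u t x (wmap x x) = x ∧
      (∀ ξ η : EuclideanSpace ℝ (Fin n),
        fderiv ℝ (fun q : EuclideanSpace ℝ (Fin n) × EuclideanSpace ℝ (Fin n) =>
          u t q.1 (wmap q.1 q.2)) (x, x) (ξ, η) = ξ + t • (η - ξ)) ∧
      (∀ ξ₁ η₁ ξ₂ η₂ : EuclideanSpace ℝ (Fin n),
        fderiv ℝ (fun q : EuclideanSpace ℝ (Fin n) × EuclideanSpace ℝ (Fin n) =>
            fderiv ℝ (fun q' : EuclideanSpace ℝ (Fin n) × EuclideanSpace ℝ (Fin n) =>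
              u t q'.1 (wmap q'.1 q'.2)) q) (x, x) (ξ₁, η₁) (ξ₂, η₂)
          = ((t - t ^ 2) / 2) • (Γ x (η₁ - ξ₁) (η₂ - ξ₂) + Γ x (η₂ - ξ₂) (η₁ - ξ₁))) := by
  intro t
  have hxx : wmap x x = 0 := hwdiag x hx
  have hW2 : ContDiffAt ℝ 2 (fun q : EuclideanSpace ℝ (Fin n) × EuclideanSpace ℝ (Fin n) =>
      wmap q.1 q.2) (x, x) :=
    (hwsmooth.contDiffAt ((hV.prod hV).mem_nhds ⟨hx, hx⟩)).of_le (WithTop.coe_le_coe.mpr le_top)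
  have hU2 : ContDiffAt ℝ 2 (fun q : EuclideanSpace ℝ (Fin n) × EuclideanSpace ℝ (Fin n) =>
      u t q.1 q.2) (x, wmap x x) :=
    ((husmooth t).contDiffAt (hW.mem_nhds (hmem x hx x hx))).of_le (WithTop.coe_le_coe.mpr le_top)
  refine ⟨hxx ▸ hu0 t x hx, fun ξ η => ?_, fun ξ₁ η₁ ξ₂ η₂ => ?_⟩
  · rw [fderiv_comp_fst_prodMk_apply (hU2.differentiableAt two_ne_zero)
      (hW2.differentiableAt two_ne_zero)]
    dsimp only
    rw [hwder x hx, hxx, huder t x hx]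
  · rw [fderiv_fderiv_comp_fst_prodMk_apply hU2 hW2]
    dsimp only
    rw [hwder x hx, hwder x hx, hwder2 x hx, hxx, huder2 t x hx, huder t x hx]
    match_scalars <;> ring
end

section
/- Let Γ be a smooth Christoffel symbol on an open U ⊆ ℝⁿ, a(x,y) the associated parallel transport with a(x,x)=id and a'(x,x)(ξ,η)ζ = −Γ(x)(η−ξ,ζ), and let X, Z be smooth vector fields with local flow α of X. Then the derivative at t = 0 of t ↦ α'(−t, α(t,x))·a(x, α(t,x))·Z(x) equals −X'(x)Z(x) − Γ(x)(X(x), Z(x)), i.e., minus the covariant derivative −(∇_Z X)(x) where the indices of the connection pair as in ∇ with Christoffel symbol Γ. -/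
/-!
By the product rule the derivative is `P'(0) Z(x) + ∂ₜ a(x, α(t,x)) Z(x)|₀`, where
`P(t) = ∂_y α(-t, α(t,x))` and `P(0) = id`. The second term is `-Γ(x)(X(x), Z(x))` by the
formula for `a'(x,x)`. For the first, `P'(0) v = D²α(0,x)((-1, X x), (0, v))`; by symmetry of the
second derivative this is `-∂_y(∂ₜα)(0,x) v + ∂_y(∂_y α)(0,x)(v, X x)`, and since `∂ₜα(0,·) = X`
and `α(0,·) = id` near `x`, it equals `-X'(x) v`.
-/

open Filter Topology
open ContinuousLinearMap (inr)

theorem ContDiffAt.eventually_differentiableAt {𝕜 E F : Type*} [NontriviallyNormedField 𝕜]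
    [NormedAddCommGroup E] [NormedSpace 𝕜 E] [NormedAddCommGroup F] [NormedSpace 𝕜 F]
    {f : E → F} {x : E} {n : ℕ} (hf : ContDiffAt 𝕜 n f x) (hn : n ≠ 0) :
    ∀ᶠ y in 𝓝 x, DifferentiableAt 𝕜 f y :=
  (hf.eventually (by simp)).mono fun _ hy => hy.differentiableAt (by exact_mod_cast hn)

section

variable {E F : Type*} [NormedAddCommGroup E] [NormedSpace ℝ E]
  [NormedAddCommGroup F] [NormedSpace ℝ F]

theorem fderiv_comp_prodMk_right {f : ℝ × E → F} {t : ℝ} {y : E}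
    (hf : DifferentiableAt ℝ f (t, y)) :
    fderiv ℝ (fun z => f (t, z)) y = (fderiv ℝ f (t, y)).comp (inr ℝ ℝ E) :=
  (hf.hasFDerivAt.comp y (hasFDerivAt_prodMk_right t y)).fderiv

theorem fderiv_fderiv_apply_inr_eq {f : ℝ × E → F} {t : ℝ} {y : E} {w : ℝ × E}
    {g : E → F} {g' : E →L[ℝ] F} (hf : DifferentiableAt ℝ (fderiv ℝ f) (t, y))
    (hfg : (fun z => fderiv ℝ f (t, z) w) =ᶠ[𝓝 y] g) (hg : HasFDerivAt g g' y) (v : E) :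
    fderiv ℝ (fderiv ℝ f) (t, y) (0, v) w = g' v := by
  have hw : HasFDerivAt (fun z => fderiv ℝ f (t, z) w)
      ((fderiv ℝ (fderiv ℝ f) (t, y)).flip w ∘L inr ℝ ℝ E) y :=
    (hf.hasFDerivAt.clm_apply (hasFDerivAt_const w _)).comp y
      (hasFDerivAt_prodMk_right t y) |>.congr_fderiv (by ext; simp)
  simpa using congrArg (· v) (hw.unique (hg.congr_of_eventuallyEq hfg))

end

section Flow

variable {E : Type*} [NormedAddCommGroup E] [NormedSpace ℝ E]
  {f : ℝ × E → E} {X : E → E} {x : E}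

theorem eventually_differentiableAt_zero_prodMk (hf : ContDiffAt ℝ 2 f (0, x)) :
    ∀ᶠ y in 𝓝 x, DifferentiableAt ℝ f (0, y) :=
  (continuous_const.prodMk continuous_id).continuousAt.eventually
    (hf.eventually_differentiableAt two_ne_zero)

theorem fderiv_zero_prodMk_apply_inr_eventuallyEq (hf : ContDiffAt ℝ 2 f (0, x))
    (hf0 : ∀ᶠ y in 𝓝 x, f (0, y) = y) (v : E) :
    (fun y => fderiv ℝ f (0, y) (0, v)) =ᶠ[𝓝 x] fun _ => v := by
  filter_upwards [eventually_differentiableAt_zero_prodMk hf, hf0.eventually_nhds] with y hy hid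
  have : fderiv ℝ (fun z => f (0, z)) y = ContinuousLinearMap.id ℝ E := by
    rw [Filter.EventuallyEq.fderiv_eq (f := id) hid, fderiv_id]
  simpa [this] using congrArg (· v) (fderiv_comp_prodMk_right hy).symm

theorem fderiv_zero_prodMk_apply_inl_eventuallyEq (hf : ContDiffAt ℝ 2 f (0, x))
    (hX : ∀ᶠ y in 𝓝 x, HasDerivAt (fun t => f (t, y)) (X y) 0) :
    (fun y => fderiv ℝ f (0, y) (1, 0)) =ᶠ[𝓝 x] X := by
  filter_upwards [eventually_differentiableAt_zero_prodMk hf, hX] with y hy hXy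
  exact (hy.hasFDerivAt.comp_hasDerivAt (0 : ℝ)
    ((hasDerivAt_id (0 : ℝ)).prodMk (hasDerivAt_const (0 : ℝ) y))).unique hXy

theorem fderiv_fderiv_apply_neg_one_inr (hf : ContDiffAt ℝ 2 f (0, x))
    (hf0 : ∀ᶠ y in 𝓝 x, f (0, y) = y)
    (hX : ∀ᶠ y in 𝓝 x, HasDerivAt (fun t => f (t, y)) (X y) 0) (v : E) :
    fderiv ℝ (fderiv ℝ f) (0, x) (-1, X x) (0, v) = -fderiv ℝ X x v := by
  have hf' : DifferentiableAt ℝ (fderiv ℝ f) (0, x) :=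
    (hf.fderiv_right (m := 1) le_rfl).differentiableAt one_ne_zero
  have hXf := fderiv_zero_prodMk_apply_inl_eventuallyEq hf hX
  have hX' : HasFDerivAt X (fderiv ℝ X x) x :=
    ((hf'.clm_apply (differentiableAt_const _)).comp x
      ((differentiableAt_const _).prodMk differentiableAt_id)).congr_of_eventuallyEq
      hXf.symm |>.hasFDerivAt
  have hmixed := fderiv_fderiv_apply_inr_eq hf' hXf hX' v
  have hspatial := fderiv_fderiv_apply_inr_eq hf'
    (fderiv_zero_prodMk_apply_inr_eventuallyEq hf hf0 (X x)) (hasFDerivAt_const (X x) x) v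
  have hsymm := hf.isSymmSndFDerivAt (by simp [minSmoothness_of_isRCLikeNormedField])
  rw [hsymm, show ((-1 : ℝ), X x) = (0, X x) - (1, 0) by simp, map_sub, hmixed, hspatial]
  simp

theorem hasDerivAt_fderiv_flow_neg_along_orbit (hf : ContDiffAt ℝ 2 f (0, x))
    (hf0 : ∀ᶠ y in 𝓝 x, f (0, y) = y)
    (hX : ∀ᶠ y in 𝓝 x, HasDerivAt (fun t => f (t, y)) (X y) 0) :
    HasDerivAt (fun t => fderiv ℝ (fun y => f (-t, y)) (f (t, x))) (-fderiv ℝ X x) 0 := by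
  set c : ℝ → ℝ × E := fun t => (-t, f (t, x))
  have hc0 : c 0 = (0, x) := by simp [c, hf0.self_of_nhds]
  have hc : HasDerivAt c (-1, X x) 0 := (hasDerivAt_neg 0).prodMk hX.self_of_nhds
  have hf' : HasFDerivAt (fderiv ℝ f) (fderiv ℝ (fderiv ℝ f) (0, x)) (c 0) := by
    rw [hc0]
    exact ((hf.fderiv_right (m := 1) le_rfl).differentiableAt one_ne_zero).hasFDerivAt
  have hdiff : ∀ᶠ t in 𝓝 0, DifferentiableAt ℝ f (c t) := by
    refine hc.continuousAt.eventually (p := fun p => DifferentiableAt ℝ f p) ?_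
    rw [hc0]
    exact hf.eventually_differentiableAt two_ne_zero
  have hderiv : HasDerivAt (fun t => fderiv ℝ f (c t) ∘L inr ℝ ℝ E) (-fderiv ℝ X x) 0 := by
    refine ((hf'.comp_hasDerivAt 0 hc).clm_comp (hasDerivAt_const 0 (inr ℝ ℝ E))).congr_deriv ?_
    ext v
    simpa using fderiv_fderiv_apply_neg_one_inr hf hf0 hX v
  refine hderiv.congr_of_eventuallyEq ?_
  filter_upwards [hdiff] with t ht
  exact fderiv_comp_prodMk_right ht

end Flow

theorem lie_derivative_of_transported_field_general
    {n : ℕ} (U : Set (EuclideanSpace ℝ (Fin n))) (hU : IsOpen U)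
    (x : EuclideanSpace ℝ (Fin n)) (hx : x ∈ U)
    (Γ : EuclideanSpace ℝ (Fin n) →
      EuclideanSpace ℝ (Fin n) →L[ℝ] EuclideanSpace ℝ (Fin n) →L[ℝ] EuclideanSpace ℝ (Fin n))
    (a : EuclideanSpace ℝ (Fin n) → EuclideanSpace ℝ (Fin n) →
      EuclideanSpace ℝ (Fin n) →L[ℝ] EuclideanSpace ℝ (Fin n))
    (hasmooth : ContDiffOn ℝ (⊤ : ℕ∞)
      (fun q : EuclideanSpace ℝ (Fin n) × EuclideanSpace ℝ (Fin n) => a q.1 q.2) (U ×ˢ U))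
    (hadiag : ∀ y ∈ U, a y y = ContinuousLinearMap.id ℝ (EuclideanSpace ℝ (Fin n)))
    (hader : ∀ y ∈ U, ∀ ξ η ζ : EuclideanSpace ℝ (Fin n),
      fderiv ℝ (fun q : EuclideanSpace ℝ (Fin n) × EuclideanSpace ℝ (Fin n) =>
        a q.1 q.2 ζ) (y, y) (ξ, η) = -(Γ y (η - ξ) ζ))
    (X Z : EuclideanSpace ℝ (Fin n) → EuclideanSpace ℝ (Fin n))
    -- `α` is the local flow of `X` on the open domain `D`
    (D : Set (ℝ × EuclideanSpace ℝ (Fin n))) (hD : IsOpen D)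
    (hD0 : ∀ y ∈ U, ((0 : ℝ), y) ∈ D)
    (α : ℝ → EuclideanSpace ℝ (Fin n) → EuclideanSpace ℝ (Fin n))
    (hα : ContDiffOn ℝ (⊤ : ℕ∞) (fun p : ℝ × EuclideanSpace ℝ (Fin n) => α p.1 p.2) D)
    (hα0 : ∀ y ∈ U, α 0 y = y)
    (hODE : ∀ p ∈ D, HasDerivAt (fun t => α t p.2) (X (α p.1 p.2)) p.1) :
    HasDerivAt (fun t => fderiv ℝ (fun y => α (-t) y) (α t x) (a x (α t x) (Z x)))
      (-(fderiv ℝ X x (Z x)) - Γ x (X x) (Z x)) 0 := by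
  have hα2 : ContDiffAt ℝ 2 (fun p : ℝ × _ => α p.1 p.2) (0, x) :=
    (hα.contDiffAt (hD.mem_nhds (hD0 x hx))).of_le (WithTop.coe_le_coe.mpr le_top)
  have hα0' : ∀ᶠ y in 𝓝 x, α 0 y = y := eventually_of_mem (hU.mem_nhds hx) hα0
  have hX : ∀ᶠ y in 𝓝 x, HasDerivAt (fun t => α t y) (X y) 0 := by
    filter_upwards [hU.mem_nhds hx] with y hy
    simpa [hα0 y hy] using hODE (0, y) (hD0 y hy)
  have hpushforward := hasDerivAt_fderiv_flow_neg_along_orbit hα2 hα0' hX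
  have htransport : HasDerivAt (fun t => a x (α t x) (Z x)) (-Γ x (X x) (Z x)) 0 := by
    have ha : DifferentiableAt ℝ (fun q : _ × _ => a q.1 q.2 (Z x)) (x, α 0 x) := by
      rw [hα0 x hx]
      exact ((hasmooth.clm_apply contDiffOn_const).contDiffAt
        ((hU.prod hU).mem_nhds ⟨hx, hx⟩)).differentiableAt (by simp)
    have := ha.hasFDerivAt.comp_hasDerivAt (0 : ℝ) ((hasDerivAt_const 0 x).prodMk hX.self_of_nhds)
    simpa [Function.comp_def, hα0 x hx, hader x hx] using this
  have hid : fderiv ℝ (fun y => α 0 y) x = ContinuousLinearMap.id ℝ _ := by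
    rw [Filter.EventuallyEq.fderiv_eq (f := id) hα0', fderiv_id]
  simpa [hα0 x hx, hadiag x hx, hid, sub_eq_add_neg] using hpushforward.clm_apply htransport

/-- Let `a(x,y)` be the parallel transport associated to a smooth Christoffel
symbol `Γ`, with `a(x,x) = id` and `a'(x,x)(ξ,η)ζ = −Γ(x)(η−ξ,ζ)`, and let `X, Z` be smooth
vector fields with local flow `α` of `X`. Then the derivative at `t = 0` of
`t ↦ α'(−t, α(t,x))·a(x, α(t,x))·Z(x)` equals `−X'(x)Z(x) − Γ(x)(X(x), Z(x))`, i.e. minus the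
covariant derivative `−(∇_Z X)(x)`. -/
theorem lie_derivative_of_transported_field
    {n : ℕ} (U : Set (EuclideanSpace ℝ (Fin n))) (hU : IsOpen U)
    (x : EuclideanSpace ℝ (Fin n)) (hx : x ∈ U)
    (Γ : EuclideanSpace ℝ (Fin n) →
      EuclideanSpace ℝ (Fin n) →L[ℝ] EuclideanSpace ℝ (Fin n) →L[ℝ] EuclideanSpace ℝ (Fin n))
    (hΓ : ContDiffOn ℝ (⊤ : ℕ∞) Γ U)
    (a : EuclideanSpace ℝ (Fin n) → EuclideanSpace ℝ (Fin n) →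
      EuclideanSpace ℝ (Fin n) →L[ℝ] EuclideanSpace ℝ (Fin n))
    (hasmooth : ContDiffOn ℝ (⊤ : ℕ∞)
      (fun q : EuclideanSpace ℝ (Fin n) × EuclideanSpace ℝ (Fin n) => a q.1 q.2) (U ×ˢ U))
    (hadiag : ∀ y ∈ U, a y y = ContinuousLinearMap.id ℝ (EuclideanSpace ℝ (Fin n)))
    (hader : ∀ y ∈ U, ∀ ξ η ζ : EuclideanSpace ℝ (Fin n),
      fderiv ℝ (fun q : EuclideanSpace ℝ (Fin n) × EuclideanSpace ℝ (Fin n) =>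
        a q.1 q.2 ζ) (y, y) (ξ, η) = -(Γ y (η - ξ) ζ))
    (X Z : EuclideanSpace ℝ (Fin n) → EuclideanSpace ℝ (Fin n))
    (hX : ContDiffOn ℝ (⊤ : ℕ∞) X U) (hZ : ContDiffOn ℝ (⊤ : ℕ∞) Z U)
    -- `α` is the local flow of `X` on the open domain `D`
    (D : Set (ℝ × EuclideanSpace ℝ (Fin n))) (hD : IsOpen D)
    (hD0 : ∀ y ∈ U, ((0 : ℝ), y) ∈ D)
    (α : ℝ → EuclideanSpace ℝ (Fin n) → EuclideanSpace ℝ (Fin n))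
    (hα : ContDiffOn ℝ (⊤ : ℕ∞) (fun p : ℝ × EuclideanSpace ℝ (Fin n) => α p.1 p.2) D)
    (hα0 : ∀ y ∈ U, α 0 y = y)
    (hαU : ∀ p ∈ D, p.2 ∈ U ∧ α p.1 p.2 ∈ U)
    (hODE : ∀ p ∈ D, HasDerivAt (fun t => α t p.2) (X (α p.1 p.2)) p.1) :
    HasDerivAt (fun t => fderiv ℝ (fun y => α (-t) y) (α t x) (a x (α t x) (Z x)))
      (-(fderiv ℝ X x (Z x)) - Γ x (X x) (Z x)) 0 :=
  lie_derivative_of_transported_field_general U hU x hx Γ a hasmooth hadiag hader X Z D hD hD0 α hα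
    hα0 hODE
end
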